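/- arXiv:2012.12328 — 2 statements merged into one kernel-verified Lean document; each statement's English description precedes it below -/
import Mathlib

section
/- Let R be a principal ideal domain and a, b ∈ R not both zero with t = gcd(a,b). Set x = −b/t, y = a/t. Then x and y are coprime, so there exist u, v ∈ R with uy − xv = 1, and the 2n×2n matrix T which acts as [[u, v],[x, y]] on coordinates (2,3), as [[y, −x],[−v, u]] on coordinates (n+2, n+3), and as the identity elsewhere, is an element of Sp_{2n}(R). -/
/-!
Clearing `t ≠ 0` from the Bézout relation `t = u a + v b` gives `u y - x v = 1`.
The matrix `T` is block diagonal, `diag(A, B)`, where `A` acts as `[[u, v], [x, y]]` on the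
coordinates `2, 3` and `B` as `[[y, -x], [-v, u]]`, the inverse transpose of that block; and
`diag(A, B)` is symplectic as soon as `Aᵀ B = 1`.
-/

open Matrix

/-- The standard symplectic form matrix `J = [[0, Iₙ], [-Iₙ, 0]]`. -/
def Jmat (n : ℕ) (R : Type*) [CommRing R] :
    Matrix (Fin n ⊕ Fin n) (Fin n ⊕ Fin n) R :=
  fromBlocks 0 1 (-1) 0

/-- `A ∈ Sp_{2n}(R)`, i.e. `AᵀJA = J`. -/
def IsSymp {n : ℕ} {R : Type*} [CommRing R]
    (A : Matrix (Fin n ⊕ Fin n) (Fin n ⊕ Fin n) R) : Prop :=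
  Aᵀ * Jmat n R * A = Jmat n R

namespace Matrix

variable {m R : Type*} [DecidableEq m] [CommRing R]

def planeMatrix (i j : m) (p q r s : R) : Matrix m m R :=
  1 + single i i (p - 1) + single i j q + single j i r + single j j (s - 1)

theorem transpose_planeMatrix (i j : m) (p q r s : R) :
    (planeMatrix i j p q r s)ᵀ = planeMatrix i j p r q s := by
  simp only [planeMatrix, transpose_add, transpose_one, transpose_single]
  abel

theorem planeMatrix_mul_planeMatrix [Fintype m] {i j : m} (hij : i ≠ j)
    (p q r s p' q' r' s' : R) :
    planeMatrix i j p q r s * planeMatrix i j p' q' r' s' =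
      planeMatrix i j (p * p' + q * r') (p * q' + q * s') (r * p' + s * r') (r * q' + s * s') := by
  simp only [planeMatrix, add_mul, mul_add, mul_one, one_mul, single_mul_single_same,
    single_mul_single_of_ne, ne_eq, hij, hij.symm, not_false_iff, add_zero]
  ext k l
  simp only [add_apply, one_apply, single_apply]
  split_ifs <;> simp_all <;> ring

theorem planeMatrix_one_zero_zero_one (i j : m) : planeMatrix i j (1 : R) 0 0 1 = 1 := by
  simp [planeMatrix]

theorem transpose_planeMatrix_mul_planeMatrix_eq_one [Fintype m] {i j : m} (hij : i ≠ j)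
    {p q r s : R} (h : p * s - r * q = 1) :
    (planeMatrix i j p q r s)ᵀ * planeMatrix i j s (-r) (-q) p = 1 := by
  rw [transpose_planeMatrix, planeMatrix_mul_planeMatrix hij, ← planeMatrix_one_zero_zero_one i j]
  congr 1
  · linear_combination h
  · ring
  · ring
  · linear_combination h

theorem fromBlocks_planeMatrix (i j : m) (p q r s p' q' r' s' : R) :
    fromBlocks (planeMatrix i j p q r s) 0 0 (planeMatrix i j p' q' r' s') =
      1 + single (Sum.inl i) (Sum.inl i) (p - 1) + single (Sum.inl i) (Sum.inl j) q
        + single (Sum.inl j) (Sum.inl i) r + single (Sum.inl j) (Sum.inl j) (s - 1)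
        + single (Sum.inr i) (Sum.inr i) (p' - 1) + single (Sum.inr i) (Sum.inr j) q'
        + single (Sum.inr j) (Sum.inr i) r' + single (Sum.inr j) (Sum.inr j) (s' - 1) := by
  ext (k | k) (l | l) <;> simp [planeMatrix, single_apply, one_apply]

end Matrix

theorem isSymp_fromBlocks {n : ℕ} {R : Type*} [CommRing R] {A B : Matrix (Fin n) (Fin n) R}
    (h : Aᵀ * B = 1) : IsSymp (fromBlocks A 0 0 B) := by
  have h' : Bᵀ * A = 1 := by simpa using congrArg transpose h
  simp [IsSymp, Jmat, fromBlocks_transpose, fromBlocks_multiply, h, h']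

theorem exists_mul_sub_mul_eq_one_of_span_pair_eq {R : Type*} [CommRing R] [IsDomain R]
    {a b t x y : R} (hab : ¬(a = 0 ∧ b = 0)) (ht : Ideal.span {a, b} = Ideal.span {t})
    (hx : t * x = -b) (hy : t * y = a) : ∃ u v : R, u * y - x * v = 1 := by
  have ht0 : t ≠ 0 := by
    rintro rfl
    rw [Ideal.span_singleton_eq_bot.mpr rfl, Ideal.span_eq_bot] at ht
    exact hab ⟨ht a (by simp), ht b (by simp)⟩
  obtain ⟨u, v, huv⟩ := Ideal.mem_span_pair.mp (ht ▸ Ideal.mem_span_singleton_self t)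
  refine ⟨u, v, mul_left_cancel₀ ht0 ?_⟩
  linear_combination huv + u * hy - v * hx

/-- In a PID, if `t = gcd(a,b)`, `x = −b/t`, `y = a/t`, then `x, y` are coprime, there are
`u, v` with `uy − xv = 1`, and the matrix `T` acting as `[[u,v],[x,y]]` on coordinates
`(2,3)`, as `[[y,−x],[−v,u]]` on coordinates `(n+2,n+3)` and as the identity elsewhere is
symplectic. -/
theorem stmt9 {R : Type*} [CommRing R] [IsDomain R]
    {n : ℕ} (hn : 3 ≤ n) (a b t x y : R)
    (hab : ¬ (a = 0 ∧ b = 0))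
    (ht : Ideal.span {a, b} = Ideal.span {t})
    (hx : t * x = -b) (hy : t * y = a) :
    IsCoprime x y ∧
    ∃ u v : R, u * y - x * v = 1 ∧
      IsSymp ((1 : Matrix (Fin n ⊕ Fin n) (Fin n ⊕ Fin n) R)
        + single (Sum.inl ⟨1, by omega⟩) (Sum.inl ⟨1, by omega⟩) (u - 1)
        + single (Sum.inl ⟨1, by omega⟩) (Sum.inl ⟨2, by omega⟩) v
        + single (Sum.inl ⟨2, by omega⟩) (Sum.inl ⟨1, by omega⟩) x
        + single (Sum.inl ⟨2, by omega⟩) (Sum.inl ⟨2, by omega⟩) (y - 1)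
        + single (Sum.inr ⟨1, by omega⟩) (Sum.inr ⟨1, by omega⟩) (y - 1)
        + single (Sum.inr ⟨1, by omega⟩) (Sum.inr ⟨2, by omega⟩) (-x)
        + single (Sum.inr ⟨2, by omega⟩) (Sum.inr ⟨1, by omega⟩) (-v)
        + single (Sum.inr ⟨2, by omega⟩) (Sum.inr ⟨2, by omega⟩) (u - 1)) := by
  obtain ⟨u, v, huv⟩ := exists_mul_sub_mul_eq_one_of_span_pair_eq hab ht hx hy
  refine ⟨⟨-v, u, by linear_combination huv⟩, u, v, huv, ?_⟩
  rw [← fromBlocks_planeMatrix]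
  exact isSymp_fromBlocks (transpose_planeMatrix_mul_planeMatrix_eq_one (by simp) huv)
end

section
/- Let R be a ring of stable range at most 2 such that Sp₄(R) is generated by its root elements, and let n ≥ 2. Embedding Sp₄(R) into Sp_{2n}(R) in the bottom-right corner blocks, the elementary subgroup of Sp_{2n}(R) decomposes as E(C_n,R) = (U⁺(C_n,R)·U⁻(C_n,R))²·Sp₄(R), meaning every element of E(C_n,R) is a product u₁⁺u₁⁻u₂⁺u₂⁻·Z with u_i^± unipotent and Z in the embedded Sp₄(R). -/
open Matrix

/-- The root elements of `Sp_{2n}(R)` for the positive roots of `C_n`. -/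
def PosRootElems (n : ℕ) (R : Type*) [CommRing R] :
    Set (Matrix (Fin n ⊕ Fin n) (Fin n ⊕ Fin n) R) :=
  {M | ∃ t : R,
    (∃ i j : Fin n, i < j ∧ M = 1 + t • (Matrix.single (Sum.inl i) (Sum.inl j) 1 -
        Matrix.single (Sum.inr j) (Sum.inr i) 1)) ∨
    (∃ i j : Fin n, i < j ∧ M = 1 + t • (Matrix.single (Sum.inl i) (Sum.inr j) 1 +
        Matrix.single (Sum.inl j) (Sum.inr i) 1)) ∨
    (∃ i : Fin n, M = 1 + t • Matrix.single (Sum.inl i) (Sum.inr i) 1)}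

/-- The root elements of `Sp_{2n}(R)` for the negative roots of `C_n`. -/
def NegRootElems (n : ℕ) (R : Type*) [CommRing R] :
    Set (Matrix (Fin n ⊕ Fin n) (Fin n ⊕ Fin n) R) :=
  {M | ∃ t : R,
    (∃ i j : Fin n, j < i ∧ M = 1 + t • (Matrix.single (Sum.inl i) (Sum.inl j) 1 -
        Matrix.single (Sum.inr j) (Sum.inr i) 1)) ∨
    (∃ i j : Fin n, i < j ∧ M = 1 + t • (Matrix.single (Sum.inr j) (Sum.inl i) 1 +
        Matrix.single (Sum.inr i) (Sum.inl j) 1)) ∨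
    (∃ i : Fin n, M = 1 + t • Matrix.single (Sum.inr i) (Sum.inl i) 1)}

/-- All root elements of `Sp_{2n}(R)`. -/
def RootElems (n : ℕ) (R : Type*) [CommRing R] :
    Set (Matrix (Fin n ⊕ Fin n) (Fin n ⊕ Fin n) R) :=
  PosRootElems n R ∪ NegRootElems n R

/-- `EL_Q`: all conjugates of root elements by symplectic matrices. -/
def ELQ (n : ℕ) (R : Type*) [CommRing R] :
    Set (Matrix (Fin n ⊕ Fin n) (Fin n ⊕ Fin n) R) :=
  {M | ∃ E ∈ RootElems n R, ∃ g, IsSymp g ∧ M = g * E * g⁻¹}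

/-- The copy of `Sp₄(R)` in `Sp_{2n}(R)` supported on the coordinates
`n−1, n, 2n−1, 2n`. -/
def EmbSp4 (n : ℕ) (hn : 2 ≤ n) (R : Type*) [CommRing R] :
    Set (Matrix (Fin n ⊕ Fin n) (Fin n ⊕ Fin n) R) :=
  {M | IsSymp M ∧ ∀ p q : Fin n ⊕ Fin n,
    (p ∉ ({Sum.inl ⟨n - 2, by omega⟩, Sum.inl ⟨n - 1, by omega⟩,
           Sum.inr ⟨n - 2, by omega⟩, Sum.inr ⟨n - 1, by omega⟩} :
        Set (Fin n ⊕ Fin n)) ∨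
     q ∉ ({Sum.inl ⟨n - 2, by omega⟩, Sum.inl ⟨n - 1, by omega⟩,
           Sum.inr ⟨n - 2, by omega⟩, Sum.inr ⟨n - 1, by omega⟩} :
        Set (Fin n ⊕ Fin n))) →
    M p q = (1 : Matrix (Fin n ⊕ Fin n) (Fin n ⊕ Fin n) R) p q}

/-!
Induction over the hyperbolic pairs `(e_k, f_k)`, `k = 0, …, n - 3`. Let `A` be symplectic and
the identity on the pairs of level `< k`. The column `A f_k` is unimodular and vanishes at the
levels `< k`, so stable range `≤ 2` shortens it onto the coordinates of level `≥ k` other than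
`f_k`. Four elements of the Heisenberg groups attached to `e_k` (upper, lower, upper, lower) then
carry `A f_k` to `f_k` and afterwards `A e_k` to `e_k`: `A = u₁ v₁ u₂ v₂ A'` with `A'` the
identity on the pairs of level `≤ k`. Symplectic matrices that are the identity on the levels
`≤ k` normalise these Heisenberg groups, so the level-`k` factors can be pushed past the factors
produced at higher levels without changing the shape `(U⁺ U⁻)²`. What is left at the end is the
identity on the first `n - 2` pairs, i.e. lies in the embedded `Sp₄(R)`.
-/

section

variable {R : Type*} [CommRing R] {n : ℕ}

variable (R) in
def StableRangeLeTwo : Prop :=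
  ∀ v₀ v₁ v₂ : R, Ideal.span {v₀, v₁, v₂} = ⊤ →
    ∃ t₁ t₂ : R, Ideal.span {v₁ + t₁ * v₀, v₂ + t₂ * v₀} = ⊤

theorem StableRangeLeTwo.exists_span_add_mul_eq_top (hR : StableRangeLeTwo R) {ι : Type*}
    [DecidableEq ι] (s : Finset ι) (hs : 2 ≤ s.card) (v : ι → R) (z : R)
    (h : Ideal.span (insert z (v '' s)) = ⊤) :
    ∃ t : ι → R, Ideal.span ((fun i => v i + t i * z) '' s) = ⊤ := by
  induction s using Finset.strongInduction generalizing z with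
  | H s ih =>
  rcases hs.eq_or_lt with hs | hs
  · obtain ⟨i, j, hij, rfl⟩ := Finset.card_eq_two.1 hs.symm
    simp only [Finset.coe_insert, Finset.coe_singleton, Set.image_insert_eq,
      Set.image_singleton] at h ⊢
    obtain ⟨t₁, t₂, ht⟩ := hR z (v i) (v j) h
    exact ⟨fun p => if p = i then t₁ else t₂, by simpa [hij.symm] using ht⟩
  obtain ⟨i₀, hi₀⟩ := Finset.card_pos.1 (by omega : 0 < s.card)
  -- write `1 = a z + ∑ μ_i v_i` and absorb `μ_{i₀} v_{i₀}` into `z`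
  obtain ⟨a, y, hy, hone⟩ := Ideal.mem_span_insert.1 (h ▸ Submodule.mem_top : (1 : R) ∈ _)
  obtain ⟨μ, rfl⟩ := (Submodule.mem_span_image_finset_iff_exists_fun' R).1 hy
  set d := a * z + μ i₀ * v i₀
  have hd : Ideal.span (insert d (v '' (s.erase i₀ : Set ι))) = ⊤ := by
    rw [Ideal.eq_top_iff_one, Ideal.mem_span_insert]
    refine ⟨1, ∑ i ∈ s.erase i₀, μ i • v i, ?_, ?_⟩
    · exact (Submodule.mem_span_image_finset_iff_exists_fun' R).2 ⟨μ, rfl⟩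
    · refine hone.trans ?_
      rw [← Finset.add_sum_erase _ _ hi₀]
      simp only [d, smul_eq_mul]
      ring
  obtain ⟨t, ht⟩ := ih _ (Finset.erase_ssubset hi₀)
    (by rw [Finset.card_erase_of_mem hi₀]; omega) d hd
  refine ⟨fun i => if i = i₀ then 0 else t i * a, eq_top_iff.2 (ht ▸ Ideal.span_le.2 ?_)⟩
  rintro _ ⟨i, hi, rfl⟩
  have hii₀ : i ≠ i₀ := Finset.ne_of_mem_erase hi
  set I := Ideal.span ((fun i => v i + (if i = i₀ then 0 else t i * a) * z) '' ↑s)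
  have hmem : ∀ j ∈ s, v j + (if j = i₀ then 0 else t j * a) * z ∈ I :=
    fun j hj => Ideal.subset_span ⟨j, hj, rfl⟩
  have hv₀ : v i₀ ∈ I := by simpa using hmem i₀ hi₀
  have hvi : v i + t i * a * z ∈ I := by simpa [hii₀] using hmem i (Finset.mem_of_mem_erase hi)
  show v i + t i * d ∈ I
  rw [show v i + t i * d = (v i + t i * a * z) + t i * μ i₀ * v i₀ by simp only [d]; ring]
  exact I.add_mem hvi (I.mul_mem_left _ hv₀)

lemma Jmat_eq_neg_J : Jmat n R = -J (Fin n) R := by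
  simp [Jmat, J, fromBlocks_neg]

lemma Jmat_transpose : (Jmat n R)ᵀ = -Jmat n R := by
  rw [Jmat_eq_neg_J, transpose_neg, J_transpose]

@[simp] lemma Jmat_mul_Jmat : Jmat n R * Jmat n R = -1 := by
  rw [Jmat_eq_neg_J, neg_mul_neg, J_squared]

@[simp] lemma Jmat_mulVec_inl (v : Fin n ⊕ Fin n → R) (i : Fin n) :
    (Jmat n R *ᵥ v) (Sum.inl i) = v (Sum.inr i) := by
  simp [Jmat, mulVec, dotProduct, Fintype.sum_sum_type, one_apply]

@[simp] lemma Jmat_mulVec_inr (v : Fin n ⊕ Fin n → R) (i : Fin n) :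
    (Jmat n R *ᵥ v) (Sum.inr i) = -v (Sum.inl i) := by
  simp [Jmat, mulVec, dotProduct, Fintype.sum_sum_type, one_apply]

@[simp] lemma Jmat_mulVec_Jmat_mulVec (v : Fin n ⊕ Fin n → R) :
    Jmat n R *ᵥ (Jmat n R *ᵥ v) = -v := by
  rw [mulVec_mulVec, Jmat_mul_Jmat, neg_mulVec, one_mulVec]

lemma Jmat_mulVec_single_inl (i : Fin n) :
    Jmat n R *ᵥ Pi.single (Sum.inl i) 1 = -Pi.single (Sum.inr i) 1 := by
  ext (j | j) <;> simp [Pi.single_apply]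

lemma Jmat_mulVec_single_inr (i : Fin n) :
    Jmat n R *ᵥ Pi.single (Sum.inr i) 1 = Pi.single (Sum.inl i) 1 := by
  ext (j | j) <;> simp [Pi.single_apply]

lemma dotProduct_Jmat_mulVec_self (v : Fin n ⊕ Fin n → R) : v ⬝ᵥ (Jmat n R *ᵥ v) = 0 := by
  simp [dotProduct, Fintype.sum_sum_type, mul_comm]

lemma isSymp_iff_mem_symplecticGroup {A : Matrix (Fin n ⊕ Fin n) (Fin n ⊕ Fin n) R} :
    IsSymp A ↔ A ∈ symplecticGroup (Fin n) R := by
  rw [SymplecticGroup.mem_iff', IsSymp, Jmat_eq_neg_J, mul_neg, neg_mul, neg_inj]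

section IsSymp

variable {A B : Matrix (Fin n ⊕ Fin n) (Fin n ⊕ Fin n) R}

lemma isSymp_one : IsSymp (1 : Matrix (Fin n ⊕ Fin n) (Fin n ⊕ Fin n) R) :=
  isSymp_iff_mem_symplecticGroup.2 (one_mem _)

lemma IsSymp.mul (hA : IsSymp A) (hB : IsSymp B) : IsSymp (A * B) :=
  isSymp_iff_mem_symplecticGroup.2 <|
    mul_mem (isSymp_iff_mem_symplecticGroup.1 hA) (isSymp_iff_mem_symplecticGroup.1 hB)

lemma IsSymp.transpose (hA : IsSymp A) : IsSymp Aᵀ :=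
  isSymp_iff_mem_symplecticGroup.2 <|
    SymplecticGroup.transpose_mem (isSymp_iff_mem_symplecticGroup.1 hA)

lemma IsSymp.mul_Jmat_mul_transpose (hA : IsSymp A) : A * Jmat n R * Aᵀ = Jmat n R := by
  have := SymplecticGroup.mem_iff.1 (isSymp_iff_mem_symplecticGroup.1 hA)
  rw [Jmat_eq_neg_J, mul_neg, neg_mul, this]

lemma IsSymp.isUnit_det (hA : IsSymp A) : IsUnit A.det :=
  SymplecticGroup.symplectic_det (isSymp_iff_mem_symplecticGroup.1 hA)

lemma IsSymp.single_inl_vecMul (hA : IsSymp A) {i : Fin n}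
    (h : A *ᵥ Pi.single (Sum.inr i) 1 = Pi.single (Sum.inr i) 1) :
    Pi.single (Sum.inl i) 1 ᵥ* A = Pi.single (Sum.inl i) 1 := by
  have key : Aᵀ *ᵥ (Jmat n R *ᵥ (A *ᵥ Pi.single (Sum.inr i) 1)) =
      Jmat n R *ᵥ Pi.single (Sum.inr i) 1 := by
    rw [mulVec_mulVec, mulVec_mulVec, hA]
  rwa [h, Jmat_mulVec_single_inr, mulVec_transpose] at key

lemma IsSymp.single_inr_vecMul (hA : IsSymp A) {i : Fin n}
    (h : A *ᵥ Pi.single (Sum.inl i) 1 = Pi.single (Sum.inl i) 1) :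
    Pi.single (Sum.inr i) 1 ᵥ* A = Pi.single (Sum.inr i) 1 := by
  have key : Aᵀ *ᵥ (Jmat n R *ᵥ (A *ᵥ Pi.single (Sum.inl i) 1)) =
      Jmat n R *ᵥ Pi.single (Sum.inl i) 1 := by
    rw [mulVec_mulVec, mulVec_mulVec, hA]
  rw [h, Jmat_mulVec_single_inl, mulVec_neg, mulVec_transpose] at key
  exact neg_injective key

lemma isSymp_one_add {N : Matrix (Fin n ⊕ Fin n) (Fin n ⊕ Fin n) R}
    (hsymm : (Jmat n R * N)ᵀ = Jmat n R * N) (hsq : N * N = 0) : IsSymp (1 + N) := by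
  have hNJ : Nᵀ * Jmat n R = -(Jmat n R * N) := by
    rw [← hsymm, transpose_mul, Jmat_transpose, mul_neg, neg_neg]
  rw [IsSymp, transpose_add, transpose_one]
  calc (1 + Nᵀ) * Jmat n R * (1 + N)
      = Jmat n R + Jmat n R * N + Nᵀ * Jmat n R + Nᵀ * Jmat n R * N := by noncomm_ring
    _ = Jmat n R := by rw [hNJ, neg_mul, mul_assoc, hsq, mul_zero]; abel

lemma IsSymp.transpose_mul_Jmat (hA : IsSymp A) :
    Aᵀ * Jmat n R = Jmat n R * A⁻¹ := by
  have h : Aᵀ * Jmat n R * A = Jmat n R := hA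
  conv_rhs => rw [← h]
  rw [mul_assoc, mul_nonsing_inv _ hA.isUnit_det, mul_one]

end IsSymp

namespace Sp

abbrev Idx (n : ℕ) := Fin n ⊕ Fin n

/-- `e_i = Sum.inl i` and `f_i = Sum.inr i` both have level `i`. -/
def level : Idx n → ℕ := Sum.elim Fin.val Fin.val

@[simp] lemma level_inl (i : Fin n) : level (Sum.inl i) = i := rfl
@[simp] lemma level_inr (i : Fin n) : level (Sum.inr i) = i := rfl

section Corner

/-- The matrices `1 ⊕ M'` with `M'` acting on the coordinates of level `≥ m`. -/
def corner (m : ℕ) : Submonoid (Matrix (Idx n) (Idx n) R) where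
  carrier :=
    {g | ∀ p q, level p < m ∨ level q < m → g p q = (1 : Matrix (Idx n) (Idx n) R) p q}
  one_mem' _ _ _ := rfl
  mul_mem' {g h} hg hh p q hpq := by
    rcases hpq with hp | hq
    · simp only [mul_apply, hg p _ (Or.inl hp), one_apply, ite_mul, one_mul, zero_mul,
        Finset.sum_ite_eq, Finset.mem_univ, if_true]
      exact hh p q (Or.inl hp)
    · simp only [mul_apply, hh _ q (Or.inr hq), one_apply, mul_ite, mul_one, mul_zero,
        Finset.sum_ite_eq', Finset.mem_univ, if_true]
      exact hg p q (Or.inr hq)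

variable {m : ℕ} {g : Matrix (Idx n) (Idx n) R}

lemma corner_anti {m m' : ℕ} (h : m' ≤ m) :
    (corner m : Submonoid (Matrix (Idx n) (Idx n) R)) ≤ corner m' :=
  fun _ hg p q hpq => hg p q (by omega)

lemma mulVec_apply_of_mem_corner (hg : g ∈ corner m) {p : Idx n} (hp : level p < m)
    (w : Idx n → R) : (g *ᵥ w) p = w p := by
  simp [mulVec, dotProduct, hg p _ (Or.inl hp), one_apply]

lemma vecMul_apply_of_mem_corner (hg : g ∈ corner m) {q : Idx n} (hq : level q < m)
    (w : Idx n → R) : (w ᵥ* g) q = w q := by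
  simp [vecMul, dotProduct, hg _ q (Or.inr hq), one_apply]

lemma mulVec_single_of_mem_corner (hg : g ∈ corner m) {p : Idx n} (hp : level p < m) :
    g *ᵥ Pi.single p 1 = Pi.single p 1 := by
  ext q
  rw [mulVec_single_one, col_apply, hg q p (Or.inr hp), one_apply, Pi.single_apply]

lemma single_vecMul_of_mem_corner (hg : g ∈ corner m) {p : Idx n} (hp : level p < m) :
    Pi.single p 1 ᵥ* g = Pi.single p 1 := by
  ext q
  rw [single_one_vecMul, row_apply, hg p q (Or.inl hp), one_apply, Pi.single_apply]
  simp only [eq_comm]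

lemma transpose_mem_corner (hg : g ∈ corner m) : gᵀ ∈ corner m := by
  intro p q hpq
  simp [hg q p hpq.symm, one_apply, eq_comm]

lemma inv_mem_corner (hg : g ∈ corner m) (hdet : IsUnit g.det) : g⁻¹ ∈ corner m := by
  intro p q hpq
  rcases hpq with hp | hq
  · have h : Pi.single p 1 ᵥ* g⁻¹ = Pi.single p 1 := by
      conv_lhs => rw [← single_vecMul_of_mem_corner hg hp]
      rw [vecMul_vecMul, mul_nonsing_inv g hdet, vecMul_one]
    have := congrFun h q
    rw [single_one_vecMul, row_apply] at this
    rw [this, one_apply, Pi.single_apply]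
    simp only [eq_comm]
  · have h : g⁻¹ *ᵥ Pi.single q 1 = Pi.single q 1 := by
      conv_lhs => rw [← mulVec_single_of_mem_corner hg hq]
      rw [mulVec_mulVec, nonsing_inv_mul g hdet, one_mulVec]
    have := congrFun h p
    rw [mulVec_single_one, col_apply] at this
    rw [this, one_apply, Pi.single_apply]

lemma mem_corner_zero (A : Matrix (Idx n) (Idx n) R) : A ∈ corner 0 :=
  fun _ _ h => absurd h (by omega)

lemma mem_corner_of_isSymp {A : Matrix (Idx n) (Idx n) R} (hA : IsSymp A)
    (h : ∀ p, level p < m → A *ᵥ Pi.single p 1 = Pi.single p 1) : A ∈ corner m := by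
  intro p q hpq
  rcases hpq with hp | hq
  · have hrow : Pi.single p 1 ᵥ* A = Pi.single p 1 := by
      cases p with
      | inl i => exact hA.single_inl_vecMul (h (Sum.inr i) hp)
      | inr i => exact hA.single_inr_vecMul (h (Sum.inl i) hp)
    have := congrFun hrow q
    rw [single_one_vecMul, row_apply] at this
    rw [this, one_apply, Pi.single_apply]
    simp only [eq_comm]
  · have := congrFun (h q hq) p
    rw [mulVec_single_one, col_apply] at this
    rw [this, one_apply, Pi.single_apply]

end Corner

section Above

variable (k : Fin n)

def SuppAbove (x : Idx n → R) : Prop := ∀ p, level p ≤ k → x p = 0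

def above : Finset (Idx n) := Finset.univ.filter fun p => (k : ℕ) < level p

def truncAbove (v : Idx n → R) : Idx n → R := fun p => if (k : ℕ) < level p then v p else 0

variable {k}

@[simp] lemma mem_above {p : Idx n} : p ∈ above k ↔ (k : ℕ) < level p := by
  simp [above]

lemma suppAbove_truncAbove (v : Idx n → R) : SuppAbove k (truncAbove k v) :=
  fun p hp => if_neg (by omega)

lemma SuppAbove.neg {x : Idx n → R} (hx : SuppAbove k x) : SuppAbove k (-x) :=
  fun p hp => by simp [hx p hp]

lemma SuppAbove.Jmat_mulVec {x : Idx n → R} (hx : SuppAbove k x) :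
    SuppAbove k (Jmat n R *ᵥ x) := by
  rintro (i | i) hi
  · simpa using hx (Sum.inr i) hi
  · simpa using hx (Sum.inl i) hi

lemma SuppAbove.apply_inl_self {x : Idx n → R} (hx : SuppAbove k x) : x (Sum.inl k) = 0 :=
  hx _ le_rfl

lemma SuppAbove.dotProduct_eq_sum {x : Idx n → R} (hx : SuppAbove k x) (w : Idx n → R) :
    x ⬝ᵥ w = ∑ p ∈ above k, x p * w p := by
  rw [above, Finset.sum_filter, dotProduct]
  refine Finset.sum_congr rfl fun p _ => ?_
  split_ifs with hp
  · rfl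
  · rw [hx p (by omega), zero_mul]

lemma truncAbove_dotProduct (v w : Idx n → R) :
    truncAbove k v ⬝ᵥ w = ∑ p ∈ above k, v p * w p := by
  rw [(suppAbove_truncAbove v).dotProduct_eq_sum]
  exact Finset.sum_congr rfl fun p hp => by rw [truncAbove, if_pos (mem_above.1 hp)]

lemma eq_truncAbove_add {w : Idx n → R} (hw : ∀ p, level p < k → w p = 0) :
    w = truncAbove k w + w (Sum.inl k) • Pi.single (Sum.inl k) 1 +
      w (Sum.inr k) • Pi.single (Sum.inr k) 1 := by
  ext (i | i) <;> rcases lt_trichotomy i k with h | rfl | h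
  · simp [truncAbove, h.ne, hw (Sum.inl i) h, not_lt_of_gt h]
  · simp [truncAbove]
  · simp [truncAbove, h.ne', h]
  · simp [truncAbove, h.ne, hw (Sum.inr i) h, not_lt_of_gt h]
  · simp [truncAbove]
  · simp [truncAbove, h.ne', h]

end Above

section Heisenberg

variable (k : Fin n)

/-- `Umat k x c = 1 + Nmat k x c = 1 + e_k xᵀ + (J x) f_kᵀ + c e_k f_kᵀ`. For `x` vanishing at the
levels `≤ k` these matrices form a Heisenberg group inside `U⁺(C_n,R)`, the unipotent radical of
the stabiliser of `e_k`; `Vmat` is its transpose, inside `U⁻(C_n,R)`. -/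
def Nmat (x : Idx n → R) (c : R) : Matrix (Idx n) (Idx n) R :=
  vecMulVec (Pi.single (Sum.inl k) 1) x + vecMulVec (Jmat n R *ᵥ x) (Pi.single (Sum.inr k) 1) +
    c • vecMulVec (Pi.single (Sum.inl k) 1) (Pi.single (Sum.inr k) 1)

def Umat (x : Idx n → R) (c : R) : Matrix (Idx n) (Idx n) R := 1 + Nmat k x c

def Vmat (x : Idx n → R) (c : R) : Matrix (Idx n) (Idx n) R := (Umat k x c)ᵀ

variable {k}

lemma Nmat_mul_Nmat {x x' : Idx n → R} (hx : x (Sum.inl k) = 0) (hx' : x' (Sum.inl k) = 0)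
    (c c' : R) :
    Nmat k x c * Nmat k x' c' =
      (x ⬝ᵥ (Jmat n R *ᵥ x')) •
        vecMulVec (Pi.single (Sum.inl k) 1) (Pi.single (Sum.inr k) 1) := by
  simp [Nmat, add_mul, mul_add, vecMulVec_mul_vecMulVec, dotProduct_single, hx, hx']

lemma Umat_mul {x x' : Idx n → R} (hx : x (Sum.inl k) = 0) (hx' : x' (Sum.inl k) = 0)
    (c c' : R) :
    Umat k x c * Umat k x' c' = Umat k (x + x') (c + c' + x ⬝ᵥ (Jmat n R *ᵥ x')) := by
  rw [Umat, Umat, Umat, add_mul, mul_add, mul_add, Nmat_mul_Nmat hx hx']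
  simp only [Nmat, mul_one, one_mul, mulVec_add, vecMulVec_add, add_vecMulVec, add_smul]
  abel

lemma Umat_zero : Umat k (0 : Idx n → R) 0 = 1 := by
  simp [Umat, Nmat]

lemma Umat_neg_mul {x : Idx n → R} (hx : x (Sum.inl k) = 0) (c : R) :
    Umat k (-x) (-c) * Umat k x c = 1 := by
  rw [Umat_mul (by simp [hx]) hx, neg_add_cancel, neg_dotProduct, dotProduct_Jmat_mulVec_self]
  simp [Umat_zero]

lemma Umat_mul_neg {x : Idx n → R} (hx : x (Sum.inl k) = 0) (c : R) :
    Umat k x c * Umat k (-x) (-c) = 1 := by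
  simpa using Umat_neg_mul (x := -x) (by simp [hx]) (-c)

lemma Vmat_neg_mul {x : Idx n → R} (hx : x (Sum.inl k) = 0) (c : R) :
    Vmat k (-x) (-c) * Vmat k x c = 1 := by
  rw [Vmat, Vmat, ← transpose_mul, Umat_mul_neg hx, transpose_one]

lemma isSymp_Umat {x : Idx n → R} (hx : x (Sum.inl k) = 0) (c : R) : IsSymp (Umat k x c) := by
  refine isSymp_one_add ?_ ?_
  · have hJN : Jmat n R * Nmat k x c = -(vecMulVec (Pi.single (Sum.inr k) 1) x +
        vecMulVec x (Pi.single (Sum.inr k) 1) +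
        c • vecMulVec (Pi.single (Sum.inr k) 1) (Pi.single (Sum.inr k) 1)) := by
      simp only [Nmat, mul_add, Matrix.mul_smul, mul_vecMulVec, Jmat_mulVec_Jmat_mulVec,
        Jmat_mulVec_single_inl, neg_vecMulVec, smul_neg]
      abel
    rw [hJN]
    simp only [transpose_neg, transpose_add, transpose_smul, transpose_vecMulVec]
    abel
  · rw [Nmat_mul_Nmat hx hx, dotProduct_Jmat_mulVec_self, zero_smul]

lemma isSymp_Vmat {x : Idx n → R} (hx : x (Sum.inl k) = 0) (c : R) : IsSymp (Vmat k x c) :=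
  (isSymp_Umat hx c).transpose

lemma transpose_mem_negRootElems_iff {M : Matrix (Idx n) (Idx n) R} :
    Mᵀ ∈ NegRootElems n R ↔ M ∈ PosRootElems n R := by
  have transpose_eq {N : Matrix (Idx n) (Idx n) R} : Mᵀ = N ↔ M = Nᵀ :=
    ⟨fun h => by rw [← h, transpose_transpose], fun h => by rw [h, transpose_transpose]⟩
  simp only [PosRootElems, NegRootElems, Set.mem_ofPred_eq, transpose_eq, transpose_add,
    transpose_one, transpose_smul, transpose_sub, transpose_single]
  refine exists_congr fun t => or_congr ⟨?_, ?_⟩ (or_congr (by simp only [add_comm]) Iff.rfl)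
  · rintro ⟨i, j, hji, rfl⟩
    exact ⟨j, i, hji, rfl⟩
  · rintro ⟨i, j, hij, rfl⟩
    exact ⟨j, i, hij, rfl⟩

lemma transpose_mem_closure_negRootElems {M : Matrix (Idx n) (Idx n) R}
    (hM : M ∈ Submonoid.closure (PosRootElems n R)) :
    Mᵀ ∈ Submonoid.closure (NegRootElems n R) := by
  induction hM using Submonoid.closure_induction with
  | mem M hM => exact Submonoid.subset_closure (transpose_mem_negRootElems_iff.2 hM)
  | one => simp
  | mul M N _ _ hM hN => simpa using Submonoid.mul_mem _ hN hM

lemma Umat_single_inl (j : Fin n) (t : R) :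
    Umat k (Pi.single (Sum.inl j) t) 0 =
      1 + t • (single (Sum.inl k) (Sum.inl j) 1 - single (Sum.inr j) (Sum.inr k) 1) := by
  rw [← mul_one t, ← smul_eq_mul, Pi.single_smul', Umat, Nmat, mulVec_smul,
    Jmat_mulVec_single_inl]
  simp [single_eq_single_vecMulVec_single, sub_eq_add_neg]

lemma Umat_single_inr (j : Fin n) (t : R) :
    Umat k (Pi.single (Sum.inr j) t) 0 =
      1 + t • (single (Sum.inl k) (Sum.inr j) 1 + single (Sum.inl j) (Sum.inr k) 1) := by
  rw [← mul_one t, ← smul_eq_mul, Pi.single_smul', Umat, Nmat, mulVec_smul,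
    Jmat_mulVec_single_inr]
  simp [single_eq_single_vecMulVec_single]

lemma Umat_zero_left (c : R) : Umat k 0 c = 1 + c • single (Sum.inl k) (Sum.inr k) 1 := by
  simp [Umat, Nmat, single_eq_single_vecMulVec_single]

lemma Umat_single_mem_posRootElems {p : Idx n} (hp : (k : ℕ) < level p) (t : R) :
    Umat k (Pi.single p t) 0 ∈ PosRootElems n R := by
  cases p with
  | inl j => exact ⟨t, Or.inl ⟨k, j, hp, Umat_single_inl j t⟩⟩
  | inr j => exact ⟨t, Or.inr (Or.inl ⟨k, j, hp, Umat_single_inr j t⟩)⟩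

lemma Umat_mem_closure {x : Idx n → R} (hx : SuppAbove k x) (c : R) :
    Umat k x c ∈ Submonoid.closure (PosRootElems n R) := by
  have key : ∀ s ⊆ above k, ∀ c : R,
      Umat k (∑ p ∈ s, Pi.single p (x p)) c ∈ Submonoid.closure (PosRootElems n R) := by
    intro s
    induction s using Finset.induction_on with
    | empty =>
      intro _ c
      rw [Finset.sum_empty]
      exact Submonoid.subset_closure ⟨c, Or.inr (Or.inr ⟨k, Umat_zero_left c⟩)⟩
    | insert q s hq ih =>
      -- split off the root element at `q`; the cross term goes into the central coordinate
      intro hs c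
      have hq' : (k : ℕ) < level q := mem_above.1 (hs (Finset.mem_insert_self q s))
      have hs' : s ⊆ above k := (Finset.subset_insert q s).trans hs
      set y := ∑ p ∈ s, Pi.single p (x p)
      have hy : y (Sum.inl k) = 0 := by
        rw [show y (Sum.inl k) = ∑ p ∈ s, Pi.single p (x p) (Sum.inl k) from
          Finset.sum_apply _ _ _]
        refine Finset.sum_eq_zero fun p hp => Pi.single_eq_of_ne ?_ _
        rintro rfl
        simpa using mem_above.1 (hs' hp)
      have hsingle : (Pi.single q (x q) : Idx n → R) (Sum.inl k) = 0 :=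
        Pi.single_eq_of_ne (by rintro rfl; simp at hq') _
      have := Umat_mul hsingle hy 0 (c - Pi.single q (x q) ⬝ᵥ (Jmat n R *ᵥ y))
      rw [zero_add, sub_add_cancel] at this
      rw [Finset.sum_insert hq, ← this]
      exact Submonoid.mul_mem _ (Submonoid.subset_closure (Umat_single_mem_posRootElems hq' _))
        (ih hs' _)
  have hsum : ∑ p ∈ above k, Pi.single p (x p) = x := by
    refine (Finset.sum_subset (Finset.subset_univ _) fun p _ hp => ?_).trans
      (Finset.univ_sum_single x)
    rw [hx p (by simpa using hp), Pi.single_zero]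
  simpa [hsum] using key _ subset_rfl c

lemma Vmat_mem_closure {x : Idx n → R} (hx : SuppAbove k x) (c : R) :
    Vmat k x c ∈ Submonoid.closure (NegRootElems n R) :=
  transpose_mem_closure_negRootElems (Umat_mem_closure hx c)

lemma isSymp_of_mem_posRootElems {M : Matrix (Idx n) (Idx n) R} (hM : M ∈ PosRootElems n R) :
    IsSymp M := by
  obtain ⟨t, ⟨i, j, hij, rfl⟩ | ⟨i, j, hij, rfl⟩ | ⟨i, rfl⟩⟩ := hM
  · rw [← Umat_single_inl]
    exact isSymp_Umat (Pi.single_eq_of_ne (by simpa using hij.ne) _) 0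
  · rw [← Umat_single_inr]
    exact isSymp_Umat (by simp) 0
  · rw [← Umat_zero_left]
    exact isSymp_Umat rfl t

lemma isSymp_of_mem_closure_rootElems {M : Matrix (Idx n) (Idx n) R}
    (hM : M ∈ Submonoid.closure (RootElems n R)) : IsSymp M := by
  induction hM using Submonoid.closure_induction with
  | mem M hM =>
    rcases hM with hM | hM
    · exact isSymp_of_mem_posRootElems hM
    · have hMt : Mᵀ ∈ PosRootElems n R :=
        transpose_mem_negRootElems_iff.1 (by rwa [transpose_transpose])
      rw [← transpose_transpose M]
      exact (isSymp_of_mem_posRootElems hMt).transpose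
  | one => exact isSymp_one
  | mul M N _ _ hM hN => exact hM.mul hN

lemma isSymp_of_mem_closure_posRootElems {M : Matrix (Idx n) (Idx n) R}
    (hM : M ∈ Submonoid.closure (PosRootElems n R)) : IsSymp M :=
  isSymp_of_mem_closure_rootElems (Submonoid.closure_mono (fun _ h => Or.inl h) hM)

lemma isSymp_of_mem_closure_negRootElems {M : Matrix (Idx n) (Idx n) R}
    (hM : M ∈ Submonoid.closure (NegRootElems n R)) : IsSymp M :=
  isSymp_of_mem_closure_rootElems (Submonoid.closure_mono (fun _ h => Or.inr h) hM)

lemma Umat_mulVec (x : Idx n → R) (c : R) (w : Idx n → R) :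
    Umat k x c *ᵥ w = w + (x ⬝ᵥ w + c * w (Sum.inr k)) • Pi.single (Sum.inl k) 1 +
      w (Sum.inr k) • (Jmat n R *ᵥ x) := by
  simp only [Umat, Nmat, add_mulVec, one_mulVec, smul_mulVec, vecMulVec_mulVec,
    single_one_dotProduct, op_smul_eq_smul, add_smul, smul_smul]
  abel

lemma Vmat_eq (x : Idx n → R) (c : R) :
    Vmat k x c = 1 + vecMulVec x (Pi.single (Sum.inl k) 1) +
      vecMulVec (Pi.single (Sum.inr k) 1) (Jmat n R *ᵥ x) +
      c • vecMulVec (Pi.single (Sum.inr k) 1) (Pi.single (Sum.inl k) 1) := by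
  simp [Vmat, Umat, Nmat, add_assoc]

lemma Vmat_mulVec (x : Idx n → R) (c : R) (w : Idx n → R) :
    Vmat k x c *ᵥ w = w + w (Sum.inl k) • (x + c • Pi.single (Sum.inr k) 1) +
      ((Jmat n R *ᵥ x) ⬝ᵥ w) • Pi.single (Sum.inr k) 1 := by
  simp only [Vmat_eq, add_mulVec, one_mulVec, smul_mulVec, vecMulVec_mulVec,
    single_one_dotProduct, op_smul_eq_smul, smul_add, smul_smul]
  module

lemma dotProduct_Umat_mulVec {x : Idx n → R} (hx : x (Sum.inl k) = 0) (c : R) (w : Idx n → R) :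
    x ⬝ᵥ (Umat k x c *ᵥ w) = x ⬝ᵥ w := by
  simp [Umat_mulVec, dotProduct_add, hx, dotProduct_Jmat_mulVec_self]

lemma Vmat_mulVec_single_inr {x : Idx n → R} (hx : x (Sum.inl k) = 0) (c : R) :
    Vmat k x c *ᵥ Pi.single (Sum.inr k) 1 = Pi.single (Sum.inr k) 1 := by
  rw [Vmat_mulVec]
  simp [hx]

lemma Umat_mem_corner {x : Idx n → R} (hx : SuppAbove k x) (c : R) : Umat k x c ∈ corner k := by
  intro p q hpq
  have hN : Nmat k x c p q = 0 := by
    rcases hpq with hp | hq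
    · have hep : (Pi.single (Sum.inl k) 1 : Idx n → R) p = 0 :=
        Pi.single_eq_of_ne (by rintro rfl; simp at hp) _
      simp [Nmat, vecMulVec_apply, hep, hx.Jmat_mulVec p hp.le]
    · have hfq : (Pi.single (Sum.inr k) 1 : Idx n → R) q = 0 :=
        Pi.single_eq_of_ne (by rintro rfl; simp at hq) _
      simp [Nmat, vecMulVec_apply, hfq, hx q hq.le]
  rw [Umat, Matrix.add_apply, hN, add_zero]

lemma Vmat_mem_corner {x : Idx n → R} (hx : SuppAbove k x) (c : R) : Vmat k x c ∈ corner k :=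
  transpose_mem_corner (Umat_mem_corner hx c)

lemma SuppAbove.transpose_mulVec {x : Idx n → R} {g : Matrix (Idx n) (Idx n) R}
    (hgk : g ∈ corner (k + 1)) (hx : SuppAbove k x) : SuppAbove k (gᵀ *ᵥ x) :=
  fun p hp => by
    rw [mulVec_transpose, vecMul_apply_of_mem_corner hgk (by omega), hx p hp]

lemma SuppAbove.inv_mulVec {x : Idx n → R} {g : Matrix (Idx n) (Idx n) R} (hg : IsSymp g)
    (hgk : g ∈ corner (k + 1)) (hx : SuppAbove k x) : SuppAbove k (g⁻¹ *ᵥ x) :=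
  fun p hp => by
    rw [mulVec_apply_of_mem_corner (inv_mem_corner hgk hg.isUnit_det) (by omega), hx p hp]

lemma Umat_mul_eq_mul_Umat {g : Matrix (Idx n) (Idx n) R} (hg : IsSymp g)
    (hgk : g ∈ corner (k + 1)) (x : Idx n → R) (c : R) :
    Umat k x c * g = g * Umat k (gᵀ *ᵥ x) c := by
  have he : g *ᵥ Pi.single (Sum.inl k) 1 = Pi.single (Sum.inl k) 1 :=
    mulVec_single_of_mem_corner hgk (by simp)
  have hf : Pi.single (Sum.inr k) 1 ᵥ* g = Pi.single (Sum.inr k) 1 :=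
    single_vecMul_of_mem_corner hgk (by simp)
  have hJ : g *ᵥ (Jmat n R *ᵥ (gᵀ *ᵥ x)) = Jmat n R *ᵥ x := by
    rw [mulVec_mulVec, mulVec_mulVec, hg.mul_Jmat_mul_transpose]
  simp only [Umat, Nmat, add_mul, mul_add, one_mul, mul_one, Matrix.smul_mul, Matrix.mul_smul,
    vecMulVec_mul, mul_vecMulVec, he, hf, hJ, ← mulVec_transpose]

lemma Vmat_mul_eq_mul_Vmat {g : Matrix (Idx n) (Idx n) R} (hg : IsSymp g)
    (hgk : g ∈ corner (k + 1)) (x : Idx n → R) (c : R) :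
    Vmat k x c * g = g * Vmat k (g⁻¹ *ᵥ x) c := by
  have he : Pi.single (Sum.inl k) 1 ᵥ* g = Pi.single (Sum.inl k) 1 :=
    single_vecMul_of_mem_corner hgk (by simp)
  have hf : g *ᵥ Pi.single (Sum.inr k) 1 = Pi.single (Sum.inr k) 1 :=
    mulVec_single_of_mem_corner hgk (by simp)
  have hx : g *ᵥ (g⁻¹ *ᵥ x) = x := by
    rw [mulVec_mulVec, mul_nonsing_inv _ hg.isUnit_det, one_mulVec]
  have hJ : (Jmat n R *ᵥ x) ᵥ* g = Jmat n R *ᵥ (g⁻¹ *ᵥ x) := by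
    rw [← mulVec_transpose, mulVec_mulVec, hg.transpose_mul_Jmat, ← mulVec_mulVec]
  simp only [Vmat_eq, add_mul, mul_add, one_mul, mul_one, Matrix.smul_mul, Matrix.mul_smul,
    vecMulVec_mul, mul_vecMulVec, he, hf, hx, hJ]

variable (k) in
def upperAt : Set (Matrix (Idx n) (Idx n) R) := {M | ∃ x c, SuppAbove k x ∧ M = Umat k x c}

variable (k) in
def lowerAt : Set (Matrix (Idx n) (Idx n) R) := {M | ∃ x c, SuppAbove k x ∧ M = Vmat k x c}

section Groups

variable {M g : Matrix (Idx n) (Idx n) R}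

lemma isSymp_of_mem_upperAt (hM : M ∈ upperAt k) : IsSymp M := by
  obtain ⟨x, c, hx, rfl⟩ := hM
  exact isSymp_Umat hx.apply_inl_self c

lemma isSymp_of_mem_lowerAt (hM : M ∈ lowerAt k) : IsSymp M := by
  obtain ⟨x, c, hx, rfl⟩ := hM
  exact isSymp_Vmat hx.apply_inl_self c

lemma exists_mul_eq_one_of_mem_upperAt (hM : M ∈ upperAt k) :
    ∃ M' ∈ upperAt k, M' * M = 1 := by
  obtain ⟨x, c, hx, rfl⟩ := hM
  exact ⟨_, ⟨-x, -c, hx.neg, rfl⟩, Umat_neg_mul hx.apply_inl_self c⟩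

lemma exists_mul_eq_one_of_mem_lowerAt (hM : M ∈ lowerAt k) :
    ∃ M' ∈ lowerAt k, M' * M = 1 := by
  obtain ⟨x, c, hx, rfl⟩ := hM
  exact ⟨_, ⟨-x, -c, hx.neg, rfl⟩, Vmat_neg_mul hx.apply_inl_self c⟩

lemma mem_closure_inf_corner_of_mem_upperAt (hM : M ∈ upperAt k) :
    M ∈ Submonoid.closure (PosRootElems n R) ⊓ corner k := by
  obtain ⟨x, c, hx, rfl⟩ := hM
  exact ⟨Umat_mem_closure hx c, Umat_mem_corner hx c⟩

lemma mem_closure_inf_corner_of_mem_lowerAt (hM : M ∈ lowerAt k) :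
    M ∈ Submonoid.closure (NegRootElems n R) ⊓ corner k := by
  obtain ⟨x, c, hx, rfl⟩ := hM
  exact ⟨Vmat_mem_closure hx c, Vmat_mem_corner hx c⟩

lemma exists_mul_eq_mul_of_mem_upperAt (hM : M ∈ upperAt k) (hg : IsSymp g)
    (hgk : g ∈ corner (k + 1)) : ∃ M' ∈ upperAt k, M * g = g * M' := by
  obtain ⟨x, c, hx, rfl⟩ := hM
  exact ⟨_, ⟨_, c, hx.transpose_mulVec hgk, rfl⟩, Umat_mul_eq_mul_Umat hg hgk x c⟩

lemma exists_mul_eq_mul_of_mem_lowerAt (hM : M ∈ lowerAt k) (hg : IsSymp g)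
    (hgk : g ∈ corner (k + 1)) : ∃ M' ∈ lowerAt k, M * g = g * M' := by
  obtain ⟨x, c, hx, rfl⟩ := hM
  exact ⟨_, ⟨_, c, hx.inv_mulVec hg hgk, rfl⟩, Vmat_mul_eq_mul_Vmat hg hgk x c⟩

end Groups

end Heisenberg

section Reduction

variable {k : Fin n}

variable (k) in
def coordsFrom : Finset (Idx n) := insert (Sum.inl k) (above k)

lemma exists_Umat_span_mulVec_eq_top (w t : Idx n → R)
    (ht : Ideal.span ((fun p => w p + t p * w (Sum.inr k)) '' coordsFrom k) = ⊤) :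
    ∃ x c, SuppAbove k x ∧ Ideal.span ((Umat k x c *ᵥ w) '' coordsFrom k) = ⊤ := by
  set x := -(Jmat n R *ᵥ truncAbove k t)
  have hx : SuppAbove k x := (suppAbove_truncAbove t).Jmat_mulVec.neg
  have hJx : Jmat n R *ᵥ x = truncAbove k t := by
    simp only [x, mulVec_neg, Jmat_mulVec_Jmat_mulVec, neg_neg]
  refine ⟨x, t (Sum.inl k), hx, eq_top_iff.2 (ht ▸ Ideal.span_le.2 ?_)⟩
  set w' := Umat k x (t (Sum.inl k)) *ᵥ w
  set I := Ideal.span (w' '' coordsFrom k)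
  have hmem : ∀ p ∈ coordsFrom k, w' p ∈ I := fun p hp => Ideal.subset_span ⟨p, hp, rfl⟩
  have hw' : ∀ p, w' p = w p + (x ⬝ᵥ w + t (Sum.inl k) * w (Sum.inr k)) *
      (Pi.single (Sum.inl k) 1 : Idx n → R) p + w (Sum.inr k) * truncAbove k t p := by
    intro p
    simp [w', Umat_mulVec, hJx]
  rintro _ ⟨p, hp, rfl⟩
  show w p + t p * w (Sum.inr k) ∈ I
  rcases Finset.mem_insert.1 hp with rfl | hp
  · -- `x ⬝ᵥ ·` is unchanged by `Umat k x c`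
    have hdot : x ⬝ᵥ w' ∈ I := by
      rw [hx.dotProduct_eq_sum]
      exact Ideal.sum_mem _ fun q hq => I.mul_mem_left _ (hmem q (Finset.mem_insert_of_mem hq))
    have h := hw' (Sum.inl k)
    rw [Pi.single_eq_same, truncAbove, if_neg (by simp)] at h
    rw [show w (Sum.inl k) + t (Sum.inl k) * w (Sum.inr k) = w' (Sum.inl k) - x ⬝ᵥ w' by
      rw [dotProduct_Umat_mulVec hx.apply_inl_self, h]; ring]
    exact I.sub_mem (hmem _ (Finset.mem_insert_self _ _)) hdot
  · have h := hw' p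
    rw [Pi.single_eq_of_ne (by rintro rfl; simp at hp), truncAbove, if_pos (mem_above.1 hp)] at h
    rw [show w p + t p * w (Sum.inr k) = w' p by rw [h]; ring]
    exact hmem p (Finset.mem_insert_of_mem hp)

lemma exists_Vmat_mulVec_inr_eq_add {w : Idx n → R} {z : R}
    (hz : z ∈ Ideal.span (w '' coordsFrom k)) :
    ∃ x c, SuppAbove k x ∧ (Vmat k x c *ᵥ w) (Sum.inr k) = w (Sum.inr k) + z := by
  obtain ⟨μ, rfl⟩ := (Submodule.mem_span_image_finset_iff_exists_fun' R).1 hz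
  set x := -(Jmat n R *ᵥ truncAbove k μ)
  have hJx : Jmat n R *ᵥ x = truncAbove k μ := by
    simp only [x, mulVec_neg, Jmat_mulVec_Jmat_mulVec, neg_neg]
  refine ⟨x, μ (Sum.inl k), (suppAbove_truncAbove μ).Jmat_mulVec.neg, ?_⟩
  rw [Vmat_mulVec, hJx, truncAbove_dotProduct, coordsFrom, Finset.sum_insert (by simp)]
  simp [x, truncAbove]
  ring

lemma exists_Umat_mulVec_eq_single_inr {w : Idx n → R} (hw : ∀ p, level p < k → w p = 0)
    (hwk : w (Sum.inr k) = 1) :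
    ∃ x c, SuppAbove k x ∧ Umat k x c *ᵥ w = Pi.single (Sum.inr k) 1 := by
  set x := Jmat n R *ᵥ truncAbove k w
  refine ⟨x, -(w (Sum.inl k) + x ⬝ᵥ w), (suppAbove_truncAbove w).Jmat_mulVec, ?_⟩
  have hdec := eq_truncAbove_add hw
  rw [hwk] at hdec
  rw [Umat_mulVec, hwk, Jmat_mulVec_Jmat_mulVec]
  linear_combination (norm := module) hdec

lemma exists_Vmat_mulVec_eq_single_inl {w : Idx n → R} (hw : ∀ p, level p < k → w p = 0)
    (hwk : w (Sum.inl k) = 1) :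
    ∃ x c, SuppAbove k x ∧ Vmat k x c *ᵥ w = Pi.single (Sum.inl k) 1 := by
  set x := -truncAbove k w
  refine ⟨x, -(w (Sum.inr k) + (Jmat n R *ᵥ x) ⬝ᵥ w), (suppAbove_truncAbove w).neg, ?_⟩
  have hdec := eq_truncAbove_add hw
  rw [hwk] at hdec
  rw [Vmat_mulVec, hwk]
  linear_combination (norm := module) hdec

lemma mem_coordsFrom {p : Idx n} (hp : (k : ℕ) ≤ level p) (hpk : p ≠ Sum.inr k) :
    p ∈ coordsFrom k := by
  rw [coordsFrom, Finset.mem_insert, mem_above]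
  rcases hp.eq_or_lt with h | h
  · left
    rcases p with i | i
    · exact congrArg Sum.inl (Fin.ext h.symm)
    · exact absurd (congrArg Sum.inr (Fin.ext h.symm)) hpk
  · exact Or.inr h

lemma two_le_card_coordsFrom (hk : (k : ℕ) + 1 < n) : 2 ≤ (coordsFrom k).card := by
  have : 0 < (above k).card := Finset.card_pos.2 ⟨Sum.inl ⟨k + 1, hk⟩, by simp⟩
  rw [coordsFrom, Finset.card_insert_of_notMem (by simp)]
  omega

lemma span_mulVec_single_inr_eq_top {A : Matrix (Idx n) (Idx n) R} (hA : IsSymp A)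
    (hAk : A ∈ corner k) :
    Ideal.span (insert ((A *ᵥ Pi.single (Sum.inr k) 1) (Sum.inr k))
      ((A *ᵥ Pi.single (Sum.inr k) 1) '' coordsFrom k)) = ⊤ := by
  set y := A *ᵥ Pi.single (Sum.inr k) 1
  have h1 : (A⁻¹ *ᵥ y) (Sum.inr k) = 1 := by
    rw [mulVec_mulVec, nonsing_inv_mul _ hA.isUnit_det, one_mulVec, Pi.single_eq_same]
  rw [Ideal.eq_top_iff_one, ← h1, mulVec, dotProduct]
  refine Ideal.sum_mem _ fun q _ => Ideal.mul_mem_left _ _ ?_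
  by_cases hq : q = Sum.inr k
  · exact Ideal.subset_span (hq ▸ Set.mem_insert _ _)
  by_cases hlow : level q < k
  · rw [show y q = 0 from (mulVec_apply_of_mem_corner hAk hlow _).trans (Pi.single_eq_of_ne hq _)]
    exact zero_mem _
  · exact Ideal.subset_span (Set.mem_insert_of_mem _ ⟨q, mem_coordsFrom (by omega) hq, rfl⟩)

lemma exists_mul_mulVec_single_inr_eq (hR : StableRangeLeTwo R) (hk : (k : ℕ) + 1 < n)
    {A : Matrix (Idx n) (Idx n) R} (hA : IsSymp A) (hAk : A ∈ corner k) :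
    ∃ u₁ ∈ upperAt k, ∃ v ∈ lowerAt k, ∃ u₂ ∈ upperAt k,
      (u₂ * (v * (u₁ * A))) *ᵥ Pi.single (Sum.inr k) 1 = Pi.single (Sum.inr k) 1 := by
  set y := A *ᵥ Pi.single (Sum.inr k) 1
  obtain ⟨t, ht⟩ := hR.exists_span_add_mul_eq_top (coordsFrom k) (two_le_card_coordsFrom hk) y
    (y (Sum.inr k)) (span_mulVec_single_inr_eq_top hA hAk)
  -- make the entries of `y` away from `f_k` unimodular, then the `f_k`-entry equal to `1`
  obtain ⟨x₁, c₁, hx₁, h₁⟩ := exists_Umat_span_mulVec_eq_top y t ht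
  obtain ⟨x₂, c₂, hx₂, h₂⟩ := exists_Vmat_mulVec_inr_eq_add
    (z := 1 - (Umat k x₁ c₁ *ᵥ y) (Sum.inr k)) (by rw [h₁]; trivial)
  set B := Vmat k x₂ c₂ * (Umat k x₁ c₁ * A)
  have hBk : B ∈ corner k :=
    mul_mem (Vmat_mem_corner hx₂ _) (mul_mem (Umat_mem_corner hx₁ _) hAk)
  obtain ⟨x₃, c₃, hx₃, h₃⟩ :=
    exists_Umat_mulVec_eq_single_inr (w := B *ᵥ Pi.single (Sum.inr k) 1)
      (fun p hp => by
        rw [mulVec_apply_of_mem_corner hBk hp, Pi.single_eq_of_ne (by rintro rfl; simp at hp)])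
      (by rw [← mulVec_mulVec, ← mulVec_mulVec, h₂]; ring)
  exact ⟨_, ⟨x₁, c₁, hx₁, rfl⟩, _, ⟨x₂, c₂, hx₂, rfl⟩, _, ⟨x₃, c₃, hx₃, rfl⟩, by
    rw [← mulVec_mulVec, h₃]⟩

lemma exists_mul_mem_corner_succ {B : Matrix (Idx n) (Idx n) R} (hB : IsSymp B)
    (hBk : B ∈ corner k)
    (hBf : B *ᵥ Pi.single (Sum.inr k) 1 = Pi.single (Sum.inr k) 1) :
    ∃ v ∈ lowerAt k, v * B ∈ corner (k + 1) := by
  -- `B` fixes `f_k`, hence also the row of `e_k`, so `(B e_k)_{e_k} = 1`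
  have hBe : (B *ᵥ Pi.single (Sum.inl k) 1) (Sum.inl k) = 1 := by
    have := congrFun (hB.single_inl_vecMul hBf) (Sum.inl k)
    rw [single_one_vecMul, row_apply, Pi.single_eq_same] at this
    rwa [mulVec_single_one, col_apply]
  obtain ⟨x, c, hx, he⟩ := exists_Vmat_mulVec_eq_single_inl
    (fun p hp => by
      rw [mulVec_apply_of_mem_corner hBk hp, Pi.single_eq_of_ne (by rintro rfl; simp at hp)])
    hBe
  refine ⟨_, ⟨x, c, hx, rfl⟩,
    mem_corner_of_isSymp ((isSymp_Vmat hx.apply_inl_self _).mul hB) fun p hp => ?_⟩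
  rcases (Nat.lt_succ_iff.1 hp).lt_or_eq with hp | hp
  · exact mulVec_single_of_mem_corner (mul_mem (Vmat_mem_corner hx _) hBk) hp
  · rcases p with i | i <;> obtain rfl : i = k := Fin.ext hp
    · rw [← mulVec_mulVec, he]
    · rw [← mulVec_mulVec, hBf, Vmat_mulVec_single_inr hx.apply_inl_self]

theorem exists_eq_upperAt_mul_lowerAt_mul (hR : StableRangeLeTwo R) (hk : (k : ℕ) + 1 < n)
    {A : Matrix (Idx n) (Idx n) R} (hA : IsSymp A) (hAk : A ∈ corner k) :
    ∃ u₁ ∈ upperAt k, ∃ v₁ ∈ lowerAt k, ∃ u₂ ∈ upperAt k, ∃ v₂ ∈ lowerAt k,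
      ∃ A', IsSymp A' ∧ A' ∈ corner (k + 1) ∧ A = u₁ * (v₁ * (u₂ * (v₂ * A'))) := by
  obtain ⟨u₁, hu₁, v₁, hv₁, u₂, hu₂, hf⟩ :=
    exists_mul_mulVec_single_inr_eq hR hk hA hAk
  set B := u₂ * (v₁ * (u₁ * A))
  have hB : IsSymp B :=
    (isSymp_of_mem_upperAt hu₂).mul ((isSymp_of_mem_lowerAt hv₁).mul
      ((isSymp_of_mem_upperAt hu₁).mul hA))
  have hBk : B ∈ corner k :=
    mul_mem (mem_closure_inf_corner_of_mem_upperAt hu₂).2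
      (mul_mem (mem_closure_inf_corner_of_mem_lowerAt hv₁).2
        (mul_mem (mem_closure_inf_corner_of_mem_upperAt hu₁).2 hAk))
  obtain ⟨v₂, hv₂, hA'k⟩ := exists_mul_mem_corner_succ hB hBk hf
  obtain ⟨u₁', hu₁', e₁⟩ := exists_mul_eq_one_of_mem_upperAt hu₁
  obtain ⟨v₁', hv₁', e₂⟩ := exists_mul_eq_one_of_mem_lowerAt hv₁
  obtain ⟨u₂', hu₂', e₃⟩ := exists_mul_eq_one_of_mem_upperAt hu₂
  obtain ⟨v₂', hv₂', e₄⟩ := exists_mul_eq_one_of_mem_lowerAt hv₂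
  refine ⟨u₁', hu₁', v₁', hv₁', u₂', hu₂', v₂', hv₂', v₂ * B,
    (isSymp_of_mem_lowerAt hv₂).mul hB, hA'k, ?_⟩
  rw [← mul_assoc v₂', e₄, one_mul, ← mul_assoc u₂', e₃, one_mul, ← mul_assoc v₁', e₂,
    one_mul, ← mul_assoc u₁', e₁, one_mul]

end Reduction


theorem exists_eq_pos_mul_neg_mul_of_mem_corner (hR : StableRangeLeTwo R) {k : ℕ}
    (hk : k ≤ n - 2) {A : Matrix (Idx n) (Idx n) R} (hA : IsSymp A) (hAk : A ∈ corner k) :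
    ∃ u₁ v₁ u₂ v₂ Z : Matrix (Idx n) (Idx n) R,
      u₁ ∈ Submonoid.closure (PosRootElems n R) ⊓ corner k ∧
      v₁ ∈ Submonoid.closure (NegRootElems n R) ⊓ corner k ∧
      u₂ ∈ Submonoid.closure (PosRootElems n R) ⊓ corner k ∧
      v₂ ∈ Submonoid.closure (NegRootElems n R) ⊓ corner k ∧
      IsSymp Z ∧ Z ∈ corner (n - 2) ∧ A = u₁ * (v₁ * (u₂ * (v₂ * Z))) := by
  induction hk using Nat.decreasingInduction generalizing A with
  | self => exact ⟨1, 1, 1, 1, A, one_mem _, one_mem _, one_mem _, one_mem _, hA, hAk, by simp⟩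
  | of_succ k hk ih =>
    obtain ⟨U₁, hU₁, V₁, hV₁, U₂, hU₂, V₂, hV₂, A', hA', hA'k, rfl⟩ :=
      exists_eq_upperAt_mul_lowerAt_mul (k := ⟨k, by omega⟩) hR (by simp only; omega) hA hAk
    obtain ⟨u₁, v₁, u₂, v₂, Z, hu₁, hv₁, hu₂, hv₂, hZ, hZk, rfl⟩ := ih hA' hA'k
    have down {S : Submonoid (Matrix (Idx n) (Idx n) R)} {M} (hM : M ∈ S ⊓ corner (k + 1)) :
        M ∈ S ⊓ corner k := ⟨hM.1, corner_anti k.le_succ hM.2⟩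
    -- move the level-`k` factors to the right of the factors acting only on levels `> k`
    obtain ⟨V₂', hV₂', e₁⟩ :=
      exists_mul_eq_mul_of_mem_lowerAt hV₂ (isSymp_of_mem_closure_posRootElems hu₁.1) hu₁.2
    obtain ⟨U₂', hU₂', e₂⟩ :=
      exists_mul_eq_mul_of_mem_upperAt hU₂ (isSymp_of_mem_closure_posRootElems hu₁.1) hu₁.2
    obtain ⟨V₁', hV₁', e₃⟩ :=
      exists_mul_eq_mul_of_mem_lowerAt hV₁ (isSymp_of_mem_closure_posRootElems hu₁.1) hu₁.2
    obtain ⟨V₂'', hV₂'', e₄⟩ :=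
      exists_mul_eq_mul_of_mem_lowerAt hV₂' (isSymp_of_mem_closure_negRootElems hv₁.1) hv₁.2
    obtain ⟨U₂'', hU₂'', e₅⟩ :=
      exists_mul_eq_mul_of_mem_upperAt hU₂' (isSymp_of_mem_closure_negRootElems hv₁.1) hv₁.2
    obtain ⟨V₂''', hV₂''', e₆⟩ :=
      exists_mul_eq_mul_of_mem_lowerAt hV₂'' (isSymp_of_mem_closure_posRootElems hu₂.1) hu₂.2
    refine ⟨U₁ * u₁, V₁' * v₁, U₂'' * u₂, V₂''' * v₂, Z,
      mul_mem (mem_closure_inf_corner_of_mem_upperAt hU₁) (down hu₁),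
      mul_mem (mem_closure_inf_corner_of_mem_lowerAt hV₁') (down hv₁),
      mul_mem (mem_closure_inf_corner_of_mem_upperAt hU₂'') (down hu₂),
      mul_mem (mem_closure_inf_corner_of_mem_lowerAt hV₂''') (down hv₂), hZ, hZk, ?_⟩
    simp only [mul_assoc]
    rw [← mul_assoc V₂ u₁, e₁, mul_assoc, ← mul_assoc U₂ u₁, e₂, mul_assoc,
      ← mul_assoc V₁ u₁, e₃, mul_assoc, ← mul_assoc V₂' v₁, e₄, mul_assoc,
      ← mul_assoc U₂' v₁, e₅, mul_assoc, ← mul_assoc V₂'' u₂, e₆, mul_assoc]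

lemma level_lt_of_notMem (hn : 2 ≤ n) {p : Idx n}
    (hp : p ∉ ({Sum.inl ⟨n - 2, by omega⟩, Sum.inl ⟨n - 1, by omega⟩,
      Sum.inr ⟨n - 2, by omega⟩, Sum.inr ⟨n - 1, by omega⟩} : Set (Idx n))) :
    level p < n - 2 := by
  by_contra h
  apply hp
  rcases p with i | i <;> simp only [level_inl, level_inr] at h <;>
    simp only [Set.mem_insert_iff, Set.mem_singleton_iff, Sum.inl.injEq, Sum.inr.injEq,
      reduceCtorEq, Fin.ext_iff, or_false, false_or] <;> omega

lemma mem_embSp4 (hn : 2 ≤ n) {Z : Matrix (Idx n) (Idx n) R} (hZ : IsSymp Z)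
    (hZk : Z ∈ corner (n - 2)) : Z ∈ EmbSp4 n hn R :=
  ⟨hZ, fun p q hpq => hZk p q (hpq.imp (level_lt_of_notMem hn) (level_lt_of_notMem hn))⟩

end Sp

end

theorem stmt15_general {R : Type*} [CommRing R] {n : ℕ} (hn : 2 ≤ n)
    (hSR2 : ∀ v₀ v₁ v₂ : R, Ideal.span {v₀, v₁, v₂} = ⊤ →
      ∃ t₁ t₂ : R, Ideal.span {v₁ + t₁ * v₀, v₂ + t₂ * v₀} = ⊤) :
    ∀ A ∈ Submonoid.closure (RootElems n R),
      ∃ u₁ v₁ u₂ v₂ Z : Matrix (Fin n ⊕ Fin n) (Fin n ⊕ Fin n) R,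
        u₁ ∈ Submonoid.closure (PosRootElems n R) ∧
        v₁ ∈ Submonoid.closure (NegRootElems n R) ∧
        u₂ ∈ Submonoid.closure (PosRootElems n R) ∧
        v₂ ∈ Submonoid.closure (NegRootElems n R) ∧
        Z ∈ EmbSp4 n hn R ∧
        A = u₁ * v₁ * u₂ * v₂ * Z := by
  intro A hA
  obtain ⟨u₁, v₁, u₂, v₂, Z, hu₁, hv₁, hu₂, hv₂, hZ, hZk, rfl⟩ :=
    Sp.exists_eq_pos_mul_neg_mul_of_mem_corner hSR2 (Nat.zero_le _)
      (Sp.isSymp_of_mem_closure_rootElems hA) (Sp.mem_corner_zero A)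
  exact ⟨u₁, v₁, u₂, v₂, Z, hu₁.1, hv₁.1, hu₂.1, hv₂.1, Sp.mem_embSp4 hn hZ hZk,
    by simp only [mul_assoc]⟩

/-- If `R` has stable range at most `2` and `Sp₄(R)` is generated by root elements, then
`E(C_n,R) = (U⁺(C_n,R)·U⁻(C_n,R))²·Sp₄(R)` with `Sp₄(R)` embedded in the bottom-right
corner blocks. -/
theorem stmt15 {R : Type*} [CommRing R] {n : ℕ} (hn : 2 ≤ n)
    (hSR2 : ∀ v₀ v₁ v₂ : R, Ideal.span {v₀, v₁, v₂} = ⊤ →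
      ∃ t₁ t₂ : R, Ideal.span {v₁ + t₁ * v₀, v₂ + t₂ * v₀} = ⊤)
    (hSp4gen : ∀ M : Matrix (Fin 2 ⊕ Fin 2) (Fin 2 ⊕ Fin 2) R, IsSymp M →
      M ∈ Submonoid.closure (RootElems 2 R)) :
    ∀ A ∈ Submonoid.closure (RootElems n R),
      ∃ u₁ v₁ u₂ v₂ Z : Matrix (Fin n ⊕ Fin n) (Fin n ⊕ Fin n) R,
        u₁ ∈ Submonoid.closure (PosRootElems n R) ∧
        v₁ ∈ Submonoid.closure (NegRootElems n R) ∧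
        u₂ ∈ Submonoid.closure (PosRootElems n R) ∧
        v₂ ∈ Submonoid.closure (NegRootElems n R) ∧
        Z ∈ EmbSp4 n hn R ∧
        A = u₁ * v₁ * u₂ * v₂ * Z :=
  stmt15_general hn hSR2
end
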